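/- Suppose that for some real a > 2 the (k+1)-th largest eigenvalue of the p×p matrix A = Σ_{i=1}^k λ_i ξ_i ξ_i^T + ρ δ δ^T satisfies λ_{k+1}(A) > a·λ_{k+1}, where λ_{k+1} is the (k+1)-th largest eigenvalue of Σ. Let U_1 be the p×(k+1) matrix formed by the first k+1 columns of U, and define γ_1 = (U_1^T δ)^T (U_1^T Σ U_1)^{-1} (U_1^T δ) (the matrix U_1^T Σ U_1 is positive definite, hence invertible). Then γ_1 ≥ ((a−2)^2/((a−1)^2 λ_1)) ||δ||_2^2. (Theorem 3, second conclusion) -/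

import Mathlib

open Matrix

namespace RDP

lemma exists_kernel {m n : ℕ} (h : m < n) (M : Matrix (Fin m) (Fin n) ℝ) :
    ∃ b : Fin n → ℝ, b ≠ 0 ∧ M *ᵥ b = 0 := by
  by_contra hc
  push_neg at hc
  have hinj : Function.Injective M.mulVecLin := by
    rw [← LinearMap.ker_eq_bot, LinearMap.ker_eq_bot']
    intro b hb
    by_contra hb0
    exact (hc b hb0) (by simpa [Matrix.mulVecLin_apply] using hb)
  have := LinearMap.finrank_le_finrank_of_injective hinj
  simp [Module.finrank_fin_fun] at this
  omega

lemma sum_extend {m p : ℕ} (h : m ≤ p) (f : Fin p → ℝ)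
    (hf : ∀ j : Fin p, ¬ (j : ℕ) < m → f j = 0) :
    ∑ j, f j = ∑ j : Fin m, f (Fin.castLE h j) := by
  classical
  set F : ℕ → ℝ := fun i => if h' : i < p then f ⟨i, h'⟩ else 0 with hF
  have h1 : ∑ j : Fin p, f j = ∑ i ∈ Finset.range p, F i := by
    rw [← Fin.sum_univ_eq_sum_range]
    exact Finset.sum_congr rfl fun j _ => by simp [hF, j.2]
  have h2 : ∑ j : Fin m, f (Fin.castLE h j) = ∑ i ∈ Finset.range m, F i := by
    rw [← Fin.sum_univ_eq_sum_range]
    refine Finset.sum_congr rfl fun j _ => ?_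
    have hj : (j : ℕ) < p := lt_of_lt_of_le j.2 h
    simp [hF, hj]
    rfl
  rw [h1, h2]
  exact (Finset.sum_subset (Finset.range_subset_range.mpr h) (fun i hi hni => by
    simp only [Finset.mem_range] at hi hni
    simp [hF, hi, hf ⟨i, hi⟩ hni])).symm

lemma dot_Q {p m : ℕ} (Q : Matrix (Fin p) (Fin m) ℝ) (hQ : Qᵀ * Q = 1)
    (b c' : Fin m → ℝ) : (Q *ᵥ b) ⬝ᵥ (Q *ᵥ c') = b ⬝ᵥ c' := by
  rw [dotProduct_mulVec, ← mulVec_transpose, mulVec_mulVec, hQ, one_mulVec]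

lemma quad_diag {p : ℕ} (Q T : Matrix (Fin p) (Fin p) ℝ)
    (η : Fin p → ℝ) (hd : Qᵀ * T * Q = Matrix.diagonal η) (b : Fin p → ℝ) :
    (Q *ᵥ b) ⬝ᵥ T *ᵥ (Q *ᵥ b) = ∑ j, η j * b j ^ 2 := by
  have key : ∀ z, (Q *ᵥ b) ⬝ᵥ z = b ⬝ᵥ (Qᵀ *ᵥ z) := fun z => by
    rw [dotProduct_mulVec, vecMul_transpose]
  rw [key, mulVec_mulVec, mulVec_mulVec, hd]
  simp only [dotProduct, mulVec_diagonal]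
  exact Finset.sum_congr rfl fun j _ => by ring

lemma quad_any {p : ℕ} (Q T : Matrix (Fin p) (Fin p) ℝ) (hQ : Qᵀ * Q = 1)
    (η : Fin p → ℝ) (hd : Qᵀ * T * Q = Matrix.diagonal η) (x : Fin p → ℝ) :
    x ⬝ᵥ T *ᵥ x = ∑ j, η j * ((Qᵀ *ᵥ x) j) ^ 2 := by
  have hQQ : Q * Qᵀ = 1 := mul_eq_one_comm.mp hQ
  have hx : Q *ᵥ (Qᵀ *ᵥ x) = x := by rw [mulVec_mulVec, hQQ, one_mulVec]
  conv_lhs => rw [← hx]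
  exact quad_diag Q T η hd (Qᵀ *ᵥ x)

lemma dot_any {p : ℕ} (Q : Matrix (Fin p) (Fin p) ℝ) (hQ : Qᵀ * Q = 1)
    (x : Fin p → ℝ) : x ⬝ᵥ x = ∑ j, ((Qᵀ *ᵥ x) j) ^ 2 := by
  have hQQ : Q * Qᵀ = 1 := mul_eq_one_comm.mp hQ
  have hx : Q *ᵥ (Qᵀ *ᵥ x) = x := by rw [mulVec_mulVec, hQQ, one_mulVec]
  conv_lhs => rw [← hx]
  rw [dot_Q Q hQ]
  simp [dotProduct, sq]

lemma vmv {p : ℕ} (u x : Fin p → ℝ) :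
    x ⬝ᵥ (vecMulVec u u) *ᵥ x = (u ⬝ᵥ x) ^ 2 := by
  have h1 : (vecMulVec u u) *ᵥ x = (u ⬝ᵥ x) • u := by
    ext i
    simp only [mulVec, dotProduct, vecMulVec_apply, Pi.smul_apply, smul_eq_mul,
      Finset.sum_mul, Finset.mul_sum]
    exact Finset.sum_congr rfl fun j _ => by ring
  rw [h1, dotProduct_smul, smul_eq_mul, dotProduct_comm, sq]

lemma dot_sum_mulVec {n : Type*} [Fintype n] {ι : Type*} (s : Finset ι)
    (A : ι → Matrix n n ℝ) (x : n → ℝ) :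
    x ⬝ᵥ (∑ i ∈ s, A i) *ᵥ x = ∑ i ∈ s, x ⬝ᵥ (A i) *ᵥ x := by
  classical
  induction s using Finset.induction with
  | empty => simp
  | insert _ _ h ih => simp [Finset.sum_insert h, add_mulVec, dotProduct_add, ih]

end RDP

set_option maxHeartbeats 2000000 in
/-- Theorem 3 (second conclusion): under the eigenvalue condition on
`A = ∑_{i=1}^k λ_i ξ_i ξ_iᵀ + ρ δ δᵀ`, the restricted discriminant power
`γ₁ = (U₁ᵀδ)ᵀ (U₁ᵀ Σ U₁)⁻¹ (U₁ᵀδ)` satisfies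
`γ₁ ≥ ((a−2)²/((a−1)² λ₁))·‖δ‖₂²`. -/
theorem rotation_discriminant_power
    {p k : ℕ} (hkp : k + 1 ≤ p)
    (S : Matrix (Fin p) (Fin p) ℝ) (hS : S.IsSymm)
    (lam : Fin p → ℝ) (xi : Fin p → (Fin p → ℝ))
    (hpos : ∀ j, 0 < lam j)
    (hdesc : ∀ i j : Fin p, i ≤ j → lam j ≤ lam i)
    (horth : ∀ i j : Fin p, xi i ⬝ᵥ xi j = if i = j then (1 : ℝ) else 0)
    (heig : ∀ j, S.mulVec (xi j) = lam j • xi j)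
    (δ : Fin p → ℝ) (ρ : ℝ) (hρ : 0 < ρ)
    (U : Matrix (Fin p) (Fin p) ℝ) (hU : Uᵀ * U = 1)
    (η : Fin p → ℝ) (hηdesc : ∀ i j : Fin p, i ≤ j → η j ≤ η i)
    (hdiag : Uᵀ * (S + ρ • vecMulVec δ δ) * U = Matrix.diagonal η)
    -- eigenvalues (in descending order) of A = ∑_{i=1}^k λ_i ξ_i ξ_iᵀ + ρ δ δᵀ
    (μ : Fin p → ℝ) (hμdesc : ∀ i j : Fin p, i ≤ j → μ j ≤ μ i)
    (V : Matrix (Fin p) (Fin p) ℝ) (hV : Vᵀ * V = 1)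
    (hAdiag : Vᵀ *
        ((∑ i : Fin k, lam ⟨i.1, by omega⟩ •
            vecMulVec (xi ⟨i.1, by omega⟩) (xi ⟨i.1, by omega⟩)) +
          ρ • vecMulVec δ δ) * V = Matrix.diagonal μ)
    -- λ_{k+1}(A) > a·λ_{k+1} for some a > 2
    (a : ℝ) (ha : 2 < a)
    (hA : a * lam ⟨k, hkp⟩ < μ ⟨k, hkp⟩) :
    (a - 2) ^ 2 / ((a - 1) ^ 2 * lam ⟨0, by omega⟩) * (∑ i, δ i ^ 2) ≤
      (U.submatrix id (Fin.castLE hkp))ᵀ.mulVec δ ⬝ᵥ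
        ((U.submatrix id (Fin.castLE hkp))ᵀ * S *
            U.submatrix id (Fin.castLE hkp))⁻¹.mulVec
          ((U.submatrix id (Fin.castLE hkp))ᵀ.mulVec δ) := by
  classical
  have hp0 : 0 < p := by omega
  have hkk : k < p := by omega
  -- eigenbasis matrix of S
  set Ξ : Matrix (Fin p) (Fin p) ℝ := Matrix.of (fun i j => xi j i) with hΞdef
  have hΞ : Ξᵀ * Ξ = 1 := by
    ext i j
    have h0 : (Ξᵀ * Ξ) i j = xi i ⬝ᵥ xi j := by
      simp [hΞdef, Matrix.mul_apply, dotProduct]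
    rw [h0, horth i j, Matrix.one_apply]
  have hSdiag : Ξᵀ * S * Ξ = Matrix.diagonal lam := by
    ext i j
    have h1 : (Ξᵀ * S * Ξ) i j = xi i ⬝ᵥ (S *ᵥ xi j) := by
      simp only [Matrix.mul_apply, mulVec, dotProduct, transpose_apply, hΞdef, Matrix.of_apply,
        Finset.sum_mul, Finset.mul_sum]
      rw [Finset.sum_comm]
      exact Finset.sum_congr rfl fun m _ => Finset.sum_congr rfl fun l _ => by ring
    rw [h1, heig j, dotProduct_smul, smul_eq_mul, horth i j, Matrix.diagonal_apply]
    by_cases h : i = j <;> simp [h]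
  have hΞq : ∀ (y : Fin p → ℝ) (j : Fin p), (Ξᵀ *ᵥ y) j = xi j ⬝ᵥ y := by
    intro y j; simp [hΞdef, mulVec, dotProduct]
  have hSq : ∀ x, x ⬝ᵥ S *ᵥ x = ∑ j, lam j * ((Ξᵀ *ᵥ x) j) ^ 2 :=
    fun x => RDP.quad_any Ξ S hΞ lam hSdiag x
  have hxq : ∀ x : Fin p → ℝ, x ⬝ᵥ x = ∑ j, ((Ξᵀ *ᵥ x) j) ^ 2 := RDP.dot_any Ξ hΞ
  have hSnn : ∀ x, 0 ≤ x ⬝ᵥ S *ᵥ x := fun x => by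
    rw [hSq]; exact Finset.sum_nonneg fun j _ => mul_nonneg (hpos j).le (sq_nonneg _)
  have hSub : ∀ x, x ⬝ᵥ S *ᵥ x ≤ lam ⟨0, hp0⟩ * (x ⬝ᵥ x) := fun x => by
    rw [hSq, hxq, Finset.mul_sum]
    exact Finset.sum_le_sum fun j _ =>
      mul_le_mul_of_nonneg_right (hdesc ⟨0, hp0⟩ j (by simp [Fin.le_def])) (sq_nonneg _)
  have hSpos : ∀ x, x ≠ 0 → 0 < x ⬝ᵥ S *ᵥ x := by
    intro x hx
    have hxx : 0 < x ⬝ᵥ x := by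
      obtain ⟨i, hi⟩ := Function.ne_iff.mp hx
      exact Finset.sum_pos' (fun i _ => mul_self_nonneg _)
        ⟨i, Finset.mem_univ _, mul_self_pos.mpr hi⟩
    rw [hxq] at hxx
    have hex : ∃ j, 0 < ((Ξᵀ *ᵥ x) j) ^ 2 := by
      by_contra hno; push_neg at hno
      have : ∑ j, ((Ξᵀ *ᵥ x) j) ^ 2 ≤ 0 := Finset.sum_nonpos fun j _ => hno j
      linarith
    obtain ⟨j, hj⟩ := hex
    rw [hSq]
    exact Finset.sum_pos' (fun i _ => mul_nonneg (hpos i).le (sq_nonneg _))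
      ⟨j, Finset.mem_univ _, mul_pos (hpos j) hj⟩
  -- U facts
  have hUU : U * Uᵀ = 1 := mul_eq_one_comm.mp hU
  set c : Fin p → ℝ := Uᵀ *ᵥ δ with hcdef
  have hδc : U *ᵥ c = δ := by rw [hcdef, mulVec_mulVec, hUU, one_mulVec]
  set U₁ := U.submatrix id (Fin.castLE hkp) with hU₁def
  have hU₁orth : U₁ᵀ * U₁ = 1 := by
    ext i j
    have h1 : (U₁ᵀ * U₁) i j = (Uᵀ * U) (Fin.castLE hkp i) (Fin.castLE hkp j) := by
      simp [hU₁def, Matrix.mul_apply]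
    rw [h1, hU]
    simp [Matrix.one_apply, Fin.castLE_inj]
  set d := U₁ᵀ *ᵥ δ with hddef
  set M := U₁ᵀ * S * U₁ with hMdef
  have hdc : ∀ j, d j = c (Fin.castLE hkp j) := by
    intro j; simp [hddef, hcdef, hU₁def, mulVec, dotProduct]
  -- M facts
  have hMquad : ∀ y : Fin (k+1) → ℝ, y ⬝ᵥ M *ᵥ y = (U₁ *ᵥ y) ⬝ᵥ S *ᵥ (U₁ *ᵥ y) := by
    intro y
    rw [hMdef, ← mulVec_mulVec, ← mulVec_mulVec, dotProduct_mulVec y, vecMul_transpose]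
  have hMnn : ∀ y, 0 ≤ y ⬝ᵥ M *ᵥ y := fun y => by rw [hMquad]; exact hSnn _
  have hU₁dot : ∀ y z : Fin (k+1) → ℝ, (U₁ *ᵥ y) ⬝ᵥ (U₁ *ᵥ z) = y ⬝ᵥ z :=
    RDP.dot_Q U₁ hU₁orth
  have hMub : ∀ y, y ⬝ᵥ M *ᵥ y ≤ lam ⟨0, hp0⟩ * (y ⬝ᵥ y) := fun y => by
    rw [hMquad]
    calc (U₁ *ᵥ y) ⬝ᵥ S *ᵥ (U₁ *ᵥ y) ≤ lam ⟨0, hp0⟩ * ((U₁ *ᵥ y) ⬝ᵥ (U₁ *ᵥ y)) := hSub _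
      _ = lam ⟨0, hp0⟩ * (y ⬝ᵥ y) := by rw [hU₁dot]
  have hMsymm : Mᵀ = M := by
    rw [hMdef, Matrix.transpose_mul, Matrix.transpose_mul, Matrix.transpose_transpose,
      hS.eq, Matrix.mul_assoc]
  have hMpd : M.PosDef := by
    rw [Matrix.posDef_iff_dotProduct_mulVec]
    constructor
    · show Mᴴ = M
      have h0 : Mᴴ = Mᵀ := by ext i j; simp [Matrix.conjTranspose_apply]
      rw [h0, hMsymm]
    · intro y hy
      have hUy : U₁ *ᵥ y ≠ 0 := by
        intro h0
        apply hy
        have : U₁ᵀ *ᵥ (U₁ *ᵥ y) = y := by rw [mulVec_mulVec, hU₁orth, one_mulVec]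
        rw [← this, h0, mulVec_zero]
      have := hSpos (U₁ *ᵥ y) hUy
      rw [← hMquad] at this
      simpa using this
  have hMdet : IsUnit M.det := isUnit_iff_ne_zero.mpr (ne_of_gt hMpd.det_pos)
  have hMinv : M * M⁻¹ = 1 := Matrix.mul_nonsing_inv M hMdet
  -- γ₁ lower bound in terms of d ⬝ᵥ d
  set y0 := M⁻¹ *ᵥ d with hy0
  have hMy : M *ᵥ y0 = d := by rw [hy0, mulVec_mulVec, hMinv, one_mulVec]
  have hyMd : y0 ⬝ᵥ M *ᵥ d = d ⬝ᵥ d := by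
    have h1 : y0 ᵥ* M = d := by rw [← hMsymm, vecMul_transpose]; exact hMy
    rw [dotProduct_mulVec, h1]
  have hyMy : y0 ⬝ᵥ M *ᵥ y0 = d ⬝ᵥ y0 := by rw [hMy]; exact dotProduct_comm _ _
  have hl0 : 0 < lam ⟨0, hp0⟩ := hpos _
  have hγ : d ⬝ᵥ d ≤ lam ⟨0, hp0⟩ * (d ⬝ᵥ y0) := by
    set r : ℝ := (lam ⟨0, hp0⟩)⁻¹ with hr
    have hr0 : 0 ≤ r := by positivity
    have hrl : r * lam ⟨0, hp0⟩ = 1 := inv_mul_cancel₀ hl0.ne'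
    have hE : 0 ≤ (y0 - r • d) ⬝ᵥ M *ᵥ (y0 - r • d) := hMnn _
    have hexp : (y0 - r • d) ⬝ᵥ M *ᵥ (y0 - r • d) =
        d ⬝ᵥ y0 - r * (d ⬝ᵥ d) - r * (d ⬝ᵥ d) + r * (r * (d ⬝ᵥ M *ᵥ d)) := by
      rw [mulVec_sub, mulVec_smul]
      rw [sub_dotProduct, dotProduct_sub, dotProduct_sub, smul_dotProduct]
      rw [dotProduct_smul, dotProduct_smul, smul_dotProduct]
      rw [hyMy, hMy, hyMd]
      have hdy : y0 ⬝ᵥ d = d ⬝ᵥ y0 := dotProduct_comm _ _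
      simp only [smul_eq_mul, hdy]
      ring
    have hQub : d ⬝ᵥ M *ᵥ d ≤ lam ⟨0, hp0⟩ * (d ⬝ᵥ d) := hMub d
    have h2 : r * (d ⬝ᵥ M *ᵥ d) ≤ d ⬝ᵥ d := by
      calc r * (d ⬝ᵥ M *ᵥ d) ≤ r * (lam ⟨0, hp0⟩ * (d ⬝ᵥ d)) :=
            mul_le_mul_of_nonneg_left hQub hr0
        _ = d ⬝ᵥ d := by rw [← mul_assoc, hrl, one_mul]
    have h3 : r * (r * (d ⬝ᵥ M *ᵥ d)) ≤ r * (d ⬝ᵥ d) := by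
      have hMd0 : 0 ≤ d ⬝ᵥ M *ᵥ d := hMnn d
      exact mul_le_mul_of_nonneg_left h2 hr0
    have h4 : r * (d ⬝ᵥ d) ≤ d ⬝ᵥ y0 := by linarith [hE, hexp.symm.le, hexp.le]
    calc d ⬝ᵥ d = lam ⟨0, hp0⟩ * (r * (d ⬝ᵥ d)) := by rw [← mul_assoc, mul_comm (lam _) r, hrl, one_mul]
      _ ≤ lam ⟨0, hp0⟩ * (d ⬝ᵥ y0) := mul_le_mul_of_nonneg_left h4 hl0.le
  -- quadratic form of Σ^tot
  have hTq : ∀ x, x ⬝ᵥ (S + ρ • vecMulVec δ δ) *ᵥ x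
      = x ⬝ᵥ S *ᵥ x + ρ * (δ ⬝ᵥ x) ^ 2 := by
    intro x
    rw [add_mulVec, dotProduct_add, smul_mulVec, dotProduct_smul, smul_eq_mul, RDP.vmv]
  -- the tail vector w
  set b2 : Fin p → ℝ := fun j => if (j : ℕ) < k + 1 then 0 else c j with hb2
  set t : ℝ := ∑ j, (b2 j) ^ 2 with htdef
  have ht0 : 0 ≤ t := Finset.sum_nonneg fun j _ => sq_nonneg _
  have hwT : (U *ᵥ b2) ⬝ᵥ (S + ρ • vecMulVec δ δ) *ᵥ (U *ᵥ b2) = ∑ j, η j * b2 j ^ 2 :=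
    RDP.quad_diag U _ η hdiag b2
  have hδw : δ ⬝ᵥ (U *ᵥ b2) = t := by
    conv_lhs => rw [← hδc]
    rw [RDP.dot_Q U hU, htdef]
    exact Finset.sum_congr rfl fun j _ => by
      by_cases hj : (j : ℕ) < k + 1 <;> simp [hb2, hj] <;> ring
  have hwlow : ρ * t ^ 2 ≤ (U *ᵥ b2) ⬝ᵥ (S + ρ • vecMulVec δ δ) *ᵥ (U *ᵥ b2) := by
    rw [hTq, hδw]
    have := hSnn (U *ᵥ b2)
    nlinarith
  -- ρ t ≤ λ_{k+1} (or t = 0)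
  have hρt : t = 0 ∨ ρ * t ≤ lam ⟨k, hkp⟩ := by
    rcases eq_or_lt_of_le ht0 with h|h
    · exact Or.inl h.symm
    right
    have hex : ∃ j : Fin p, b2 j ≠ 0 := by
      by_contra hall; push_neg at hall
      have : t = 0 := by
        rw [htdef]; exact Finset.sum_eq_zero fun j _ => by rw [hall j]; ring
      linarith
    obtain ⟨j₀, hj₀⟩ := hex
    have hj₀k : k + 1 ≤ (j₀ : ℕ) := by
      by_contra hcon
      have hlt : (j₀ : ℕ) < k + 1 := by omega
      exact hj₀ (by simp only [hb2, if_pos hlt])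
    have hk2 : k + 2 ≤ p := by have := j₀.2; omega
    have hup : ∑ j, η j * b2 j ^ 2 ≤ η ⟨k+1, by omega⟩ * t := by
      rw [htdef, Finset.mul_sum]
      refine Finset.sum_le_sum fun j _ => ?_
      by_cases hj : (j : ℕ) < k + 1
      · simp [hb2, hj, show (j : ℕ) ≤ k by omega]
      · exact mul_le_mul_of_nonneg_right
          (hηdesc ⟨k+1, by omega⟩ j (by simp [Fin.le_def]; omega)) (sq_nonneg _)
    -- Claim B : η_{k+2} ≤ λ_{k+1}
    have hB : η ⟨k+1, by omega⟩ ≤ lam ⟨k, hkp⟩ := by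
      set g : Fin (k+1) → (Fin p → ℝ) :=
        fun i => if h' : (i : ℕ) < k then xi ⟨i.1, by omega⟩ else δ with hg
      obtain ⟨b, hb0, hbker⟩ := RDP.exists_kernel (show k+1 < k+2 by omega)
        (Matrix.of fun (i : Fin (k+1)) (j : Fin (k+2)) => (g i ᵥ* U) (Fin.castLE hk2 j))
      set bx : Fin p → ℝ := fun l => if h' : (l : ℕ) < k + 2 then b ⟨l.1, h'⟩ else 0 with hbx
      have hcon : ∀ i : Fin (k+1), g i ⬝ᵥ (U *ᵥ bx) = 0 := by
        intro i
        have h1 : g i ⬝ᵥ (U *ᵥ bx) = ∑ l, (g i ᵥ* U) l * bx l := by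
          rw [dotProduct_mulVec]; rfl
        have h2 : ∀ l : Fin p, ¬ (l : ℕ) < k + 2 → (g i ᵥ* U) l * bx l = 0 := by
          intro l hl; simp [hbx, hl]
        rw [h1, RDP.sum_extend hk2 _ h2]
        have h3 : ∀ j : Fin (k+2), bx (Fin.castLE hk2 j) = b j := by
          intro j; simp [hbx, j.2]
        calc ∑ j : Fin (k+2), (g i ᵥ* U) (Fin.castLE hk2 j) * bx (Fin.castLE hk2 j)
            = ∑ j : Fin (k+2), (g i ᵥ* U) (Fin.castLE hk2 j) * b j :=
              Finset.sum_congr rfl fun j _ => by rw [h3]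
          _ = ((Matrix.of fun (i : Fin (k+1)) (j : Fin (k+2)) =>
                (g i ᵥ* U) (Fin.castLE hk2 j)) *ᵥ b) i := by
              simp [mulVec, dotProduct]
          _ = 0 := by rw [hbker]; rfl
      have hδx : δ ⬝ᵥ (U *ᵥ bx) = 0 := by
        have h0 := hcon ⟨k, by omega⟩
        simpa [hg] using h0
      have hxix : ∀ j : Fin p, (j : ℕ) < k → xi j ⬝ᵥ (U *ᵥ bx) = 0 := by
        intro j hj
        have h0 := hcon ⟨j.1, by omega⟩
        simp only [hg] at h0
        rw [dif_pos (show ((⟨j.1, by omega⟩ : Fin (k+1)) : ℕ) < k from hj)] at h0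
        exact h0
      set nB : ℝ := ∑ l, bx l ^ 2 with hnBdef
      have hnB : (U *ᵥ bx) ⬝ᵥ (U *ᵥ bx) = nB := by
        rw [RDP.dot_Q U hU]; simp [hnBdef, dotProduct, sq]
      have hnBpos : 0 < nB := by
        obtain ⟨j, hj⟩ := Function.ne_iff.mp hb0
        have hjlt : (j : ℕ) < p := by have := j.2; omega
        have hbxj : bx ⟨j.1, hjlt⟩ ≠ 0 := by
          have : bx ⟨j.1, hjlt⟩ = b j := by simp [hbx, j.2]
          rw [this]; simpa using hj
        exact Finset.sum_pos' (fun l _ => sq_nonneg _)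
          ⟨⟨j.1, hjlt⟩, Finset.mem_univ _,
            lt_of_le_of_ne (sq_nonneg _) (Ne.symm (pow_ne_zero 2 hbxj))⟩
      have hq1 : (U *ᵥ bx) ⬝ᵥ (S + ρ • vecMulVec δ δ) *ᵥ (U *ᵥ bx) = ∑ l, η l * bx l ^ 2 :=
        RDP.quad_diag U _ η hdiag bx
      have hq2 : η ⟨k+1, by omega⟩ * nB ≤ ∑ l, η l * bx l ^ 2 := by
        rw [hnBdef, Finset.mul_sum]
        refine Finset.sum_le_sum fun l _ => ?_
        by_cases hl : (l : ℕ) < k + 2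
        · exact mul_le_mul_of_nonneg_right
            (hηdesc l ⟨k+1, by omega⟩ (by simp [Fin.le_def]; omega)) (sq_nonneg _)
        · simp [hbx, hl]
      have hq3 : (U *ᵥ bx) ⬝ᵥ (S + ρ • vecMulVec δ δ) *ᵥ (U *ᵥ bx)
          = (U *ᵥ bx) ⬝ᵥ S *ᵥ (U *ᵥ bx) := by
        rw [hTq, hδx]; ring
      have hq4 : (U *ᵥ bx) ⬝ᵥ S *ᵥ (U *ᵥ bx) ≤ lam ⟨k, hkp⟩ * nB := by
        rw [hSq, ← hnB, hxq, Finset.mul_sum]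
        refine Finset.sum_le_sum fun l _ => ?_
        by_cases hl : (l : ℕ) < k
        · have h0 : (Ξᵀ *ᵥ (U *ᵥ bx)) l = 0 := by rw [hΞq]; exact hxix l hl
          simp [h0]
        · exact mul_le_mul_of_nonneg_right
            (hdesc ⟨k, hkp⟩ l (by simp [Fin.le_def]; omega)) (sq_nonneg _)
      have : η ⟨k+1, by omega⟩ * nB ≤ lam ⟨k, hkp⟩ * nB := by
        calc η ⟨k+1, by omega⟩ * nB ≤ ∑ l, η l * bx l ^ 2 := hq2
          _ = (U *ᵥ bx) ⬝ᵥ (S + ρ • vecMulVec δ δ) *ᵥ (U *ᵥ bx) := hq1.symm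
          _ = (U *ᵥ bx) ⬝ᵥ S *ᵥ (U *ᵥ bx) := hq3
          _ ≤ lam ⟨k, hkp⟩ * nB := hq4
      exact le_of_mul_le_mul_right this hnBpos
    have hchain : ρ * t ^ 2 ≤ lam ⟨k, hkp⟩ * t := by
      calc ρ * t ^ 2 ≤ (U *ᵥ b2) ⬝ᵥ (S + ρ • vecMulVec δ δ) *ᵥ (U *ᵥ b2) := hwlow
        _ = ∑ j, η j * b2 j ^ 2 := hwT
        _ ≤ η ⟨k+1, by omega⟩ * t := hup
        _ ≤ lam ⟨k, hkp⟩ * t := mul_le_mul_of_nonneg_right hB ht0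
    exact le_of_mul_le_mul_right (by nlinarith) h
  -- Claim C : μ_{k+1} ≤ ρ ‖δ‖²
  have hμρ : μ ⟨k, hkp⟩ ≤ ρ * (∑ i, δ i ^ 2) := by
    set A := (∑ i : Fin k, lam ⟨i.1, by omega⟩ •
        vecMulVec (xi ⟨i.1, by omega⟩) (xi ⟨i.1, by omega⟩)) + ρ • vecMulVec δ δ with hAdef
    have hAq : ∀ x, x ⬝ᵥ A *ᵥ x
        = (∑ i : Fin k, lam ⟨i.1, by omega⟩ * ((xi ⟨i.1, by omega⟩ : Fin p → ℝ) ⬝ᵥ x) ^ 2)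
          + ρ * (δ ⬝ᵥ x) ^ 2 := by
      intro x
      rw [hAdef, add_mulVec, dotProduct_add, smul_mulVec, dotProduct_smul, smul_eq_mul,
        RDP.vmv, RDP.dot_sum_mulVec]
      congr 1
      exact Finset.sum_congr rfl fun i _ => by
        rw [smul_mulVec, dotProduct_smul, smul_eq_mul, RDP.vmv]
    set gC : Fin k → (Fin p → ℝ) := fun i => xi ⟨i.1, by omega⟩ with hgC
    obtain ⟨b, hb0, hbker⟩ := RDP.exists_kernel (show k < k+1 by omega)
      (Matrix.of fun (i : Fin k) (j : Fin (k+1)) => (gC i ᵥ* V) (Fin.castLE hkp j))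
    set bx : Fin p → ℝ := fun l => if h' : (l : ℕ) < k + 1 then b ⟨l.1, h'⟩ else 0 with hbx
    have hcon : ∀ i : Fin k, gC i ⬝ᵥ (V *ᵥ bx) = 0 := by
      intro i
      have h1 : gC i ⬝ᵥ (V *ᵥ bx) = ∑ l, (gC i ᵥ* V) l * bx l := by
        rw [dotProduct_mulVec]; rfl
      have h2 : ∀ l : Fin p, ¬ (l : ℕ) < k + 1 → (gC i ᵥ* V) l * bx l = 0 := by
        intro l hl; simp [hbx, hl, show ¬ (l : ℕ) ≤ k by omega]
      rw [h1, RDP.sum_extend hkp _ h2]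
      have h3 : ∀ j : Fin (k+1), bx (Fin.castLE hkp j) = b j := by
        intro j; simp [hbx, j.2, show (j : ℕ) ≤ k by have := j.2; omega]
      calc ∑ j : Fin (k+1), (gC i ᵥ* V) (Fin.castLE hkp j) * bx (Fin.castLE hkp j)
          = ∑ j : Fin (k+1), (gC i ᵥ* V) (Fin.castLE hkp j) * b j :=
            Finset.sum_congr rfl fun j _ => by rw [h3]
        _ = ((Matrix.of fun (i : Fin k) (j : Fin (k+1)) =>
              (gC i ᵥ* V) (Fin.castLE hkp j)) *ᵥ b) i := by
            simp [mulVec, dotProduct]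
        _ = 0 := by rw [hbker]; rfl
    set nC : ℝ := ∑ l, bx l ^ 2 with hnCdef
    have hnC : (V *ᵥ bx) ⬝ᵥ (V *ᵥ bx) = nC := by
      rw [RDP.dot_Q V hV]; simp [hnCdef, dotProduct, sq]
    have hnCpos : 0 < nC := by
      obtain ⟨j, hj⟩ := Function.ne_iff.mp hb0
      have hjlt : (j : ℕ) < p := by have := j.2; omega
      have hbxj : bx ⟨j.1, hjlt⟩ ≠ 0 := by
        have : bx ⟨j.1, hjlt⟩ = b j := by simp [hbx, j.2, show (j : ℕ) ≤ k by have := j.2; omega]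
        rw [this]; simpa using hj
      exact Finset.sum_pos' (fun l _ => sq_nonneg _)
        ⟨⟨j.1, hjlt⟩, Finset.mem_univ _,
          lt_of_le_of_ne (sq_nonneg _) (Ne.symm (pow_ne_zero 2 hbxj))⟩
    have hq1 : (V *ᵥ bx) ⬝ᵥ A *ᵥ (V *ᵥ bx) = ∑ l, μ l * bx l ^ 2 :=
      RDP.quad_diag V A μ hAdiag bx
    have hq2 : μ ⟨k, hkp⟩ * nC ≤ ∑ l, μ l * bx l ^ 2 := by
      rw [hnCdef, Finset.mul_sum]
      refine Finset.sum_le_sum fun l _ => ?_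
      by_cases hl : (l : ℕ) < k + 1
      · exact mul_le_mul_of_nonneg_right
          (hμdesc l ⟨k, hkp⟩ (by simp [Fin.le_def]; omega)) (sq_nonneg _)
      · simp [hbx, hl, show ¬ (l : ℕ) ≤ k by omega]
    have hq3 : (V *ᵥ bx) ⬝ᵥ A *ᵥ (V *ᵥ bx) = ρ * (δ ⬝ᵥ (V *ᵥ bx)) ^ 2 := by
      rw [hAq]
      have h0 : ∀ i : Fin k,
          lam ⟨i.1, by omega⟩ * ((xi ⟨i.1, by omega⟩ : Fin p → ℝ) ⬝ᵥ (V *ᵥ bx)) ^ 2 = 0 := by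
        intro i
        have := hcon i
        simp only [hgC] at this
        rw [this]; ring
      rw [Finset.sum_eq_zero fun i _ => h0 i, zero_add]
    have hq4 : ρ * (δ ⬝ᵥ (V *ᵥ bx)) ^ 2 ≤ ρ * ((∑ i, δ i ^ 2) * nC) := by
      refine mul_le_mul_of_nonneg_left ?_ hρ.le
      have hcs := Finset.sum_mul_sq_le_sq_mul_sq Finset.univ δ (V *ᵥ bx)
      have h5 : ∑ l, (V *ᵥ bx) l ^ 2 = nC := by
        rw [← hnC]; simp [dotProduct, sq]
      calc (δ ⬝ᵥ (V *ᵥ bx)) ^ 2 = (∑ l, δ l * (V *ᵥ bx) l) ^ 2 := rfl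
        _ ≤ (∑ l, δ l ^ 2) * ∑ l, (V *ᵥ bx) l ^ 2 := hcs
        _ = (∑ i, δ i ^ 2) * nC := by rw [h5]
    have hfin : μ ⟨k, hkp⟩ * nC ≤ (ρ * (∑ i, δ i ^ 2)) * nC := by
      calc μ ⟨k, hkp⟩ * nC ≤ ∑ l, μ l * bx l ^ 2 := hq2
        _ = (V *ᵥ bx) ⬝ᵥ A *ᵥ (V *ᵥ bx) := hq1.symm
        _ = ρ * (δ ⬝ᵥ (V *ᵥ bx)) ^ 2 := hq3
        _ ≤ ρ * ((∑ i, δ i ^ 2) * nC) := hq4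
        _ = (ρ * (∑ i, δ i ^ 2)) * nC := by ring
    exact le_of_mul_le_mul_right hfin hnCpos
  -- splitting ‖δ‖²
  have hsplit : (∑ i, δ i ^ 2) = d ⬝ᵥ d + t := by
    have h1 : (∑ i, δ i ^ 2) = c ⬝ᵥ c := by
      calc ∑ i, δ i ^ 2 = δ ⬝ᵥ δ := by simp [dotProduct, sq]
        _ = (U *ᵥ c) ⬝ᵥ (U *ᵥ c) := by rw [hδc]
        _ = c ⬝ᵥ c := RDP.dot_Q U hU c c
    have h2 : d ⬝ᵥ d = ∑ j : Fin p, (if (j : ℕ) < k + 1 then c j ^ 2 else 0) := by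
      rw [RDP.sum_extend hkp _ (fun j hj => by simp [hj])]
      simp only [dotProduct]
      refine (Finset.sum_congr rfl fun j _ => ?_).symm
      have hjlt : ((Fin.castLE hkp j : Fin p) : ℕ) < k + 1 := j.2
      rw [if_pos hjlt, hdc j, sq]
    rw [h1, h2, htdef, ← Finset.sum_add_distrib]
    refine Finset.sum_congr rfl fun j _ => ?_
    by_cases hj : (j : ℕ) < k + 1 <;> simp only [hb2, hj, ↓reduceIte] <;> ring
  have hD2nn : 0 ≤ d ⬝ᵥ d := by
    have h0 : d ⬝ᵥ d = ∑ j, d j ^ 2 := by simp [dotProduct, sq]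
    rw [h0]; exact Finset.sum_nonneg fun j _ => sq_nonneg _
  have hSδnn : 0 ≤ ∑ i, δ i ^ 2 := Finset.sum_nonneg fun i _ => sq_nonneg _
  -- a·t ≤ ‖δ‖²
  have hat : a * t ≤ ∑ i, δ i ^ 2 := by
    rcases hρt with h|h
    · rw [h, mul_zero]; exact hSδnn
    · have h2 : a * (ρ * t) ≤ a * lam ⟨k, hkp⟩ :=
        mul_le_mul_of_nonneg_left h (by linarith)
      have h3 : a * lam ⟨k, hkp⟩ ≤ ρ * (∑ i, δ i ^ 2) := le_trans hA.le hμρ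
      have h4 : ρ * (a * t) ≤ ρ * (∑ i, δ i ^ 2) := by
        have h5 : ρ * (a * t) = a * (ρ * t) := by ring
        linarith
      exact le_of_mul_le_mul_left h4 hρ
  -- final arithmetic
  show (a - 2) ^ 2 / ((a - 1) ^ 2 * lam ⟨0, hp0⟩) * (∑ i, δ i ^ 2) ≤ d ⬝ᵥ y0
  rw [div_mul_eq_mul_div, div_le_iff₀ (mul_pos (by nlinarith : (0:ℝ) < (a - 1) ^ 2) hl0)]
  have h3 : (a - 1) * t ≤ d ⬝ᵥ d := by nlinarith
  have hkey : (a - 2) ^ 2 * (∑ i, δ i ^ 2) ≤ (a - 1) ^ 2 * (d ⬝ᵥ d) := by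
    rw [hsplit]
    nlinarith [mul_le_mul_of_nonneg_left h3 (show (0:ℝ) ≤ 2*a - 3 by nlinarith),
      mul_nonneg ht0 (show (0:ℝ) ≤ a^2 - a - 1 by nlinarith)]
  calc (a - 2) ^ 2 * (∑ i, δ i ^ 2) ≤ (a - 1) ^ 2 * (d ⬝ᵥ d) := hkey
    _ ≤ (a - 1) ^ 2 * (lam ⟨0, hp0⟩ * (d ⬝ᵥ y0)) :=
        mul_le_mul_of_nonneg_left hγ (sq_nonneg _)
    _ = d ⬝ᵥ y0 * ((a - 1) ^ 2 * lam ⟨0, hp0⟩) := by ring
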